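/- Necessary condition for core increase: after inserting edge (u,v) with c_old = core(u,G) ≤ core(v,G), any node w ∈ V_c whose core number increases (w ∈ V_c*) must satisfy cnt(w) ≥ c_old + 1, where cnt(w) counts neighbors x of w (in the new graph) with old core number core(x, G) ≥ c_old. -/
import Mathlib


variable {V : Type*} [Fintype V]

/-- The k-core of `G`, as the set of vertices contained in some subgraph
(vertex set) in which every vertex has at least `k` neighbors inside the set. -/
def coreSet (G : SimpleGraph V) (k : ℕ) : Set V :=
  {v | ∃ S : Set V, v ∈ S ∧ ∀ u ∈ S, k ≤ (S ∩ G.neighborSet u).ncard}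

/-- The core number of `v`: the largest `k` such that `v` belongs to the `k`-core. -/
noncomputable def coreNumber (G : SimpleGraph V) (v : V) : ℕ :=
  sSup {k | v ∈ coreSet G k}

lemma bddAbove_core (G : SimpleGraph V) (v : V) :
    BddAbove {k | v ∈ coreSet G k} := by
  refine ⟨Fintype.card V, fun k hk => ?_⟩
  obtain ⟨S, hv, hS⟩ := hk
  refine (hS v hv).trans ?_
  calc (S ∩ G.neighborSet v).ncard ≤ (Set.univ : Set V).ncard :=
        Set.ncard_le_ncard (Set.subset_univ _) (Set.toFinite _)
    _ = Fintype.card V := by simp [Set.ncard_univ]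

lemma mem_coreSet_coreNumber (G : SimpleGraph V) (v : V) :
    v ∈ coreSet G (coreNumber G v) := by
  have h0 : 0 ∈ {k | v ∈ coreSet G k} :=
    ⟨{v}, Set.mem_singleton v, fun u _ => Nat.zero_le _⟩
  exact Nat.sSup_mem ⟨0, h0⟩ (bddAbove_core G v)

lemma le_coreNumber (G : SimpleGraph V) {v : V} {k : ℕ} (h : v ∈ coreSet G k) :
    k ≤ coreNumber G v := le_csSup (bddAbove_core G v) h

lemma coreNumber_insert_le (G : SimpleGraph V) (u v x : V) :
    coreNumber (G ⊔ SimpleGraph.fromEdgeSet {s(u, v)}) x ≤ coreNumber G x + 1 := by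
  classical
  set G' := G ⊔ SimpleGraph.fromEdgeSet {s(u, v)} with hG'
  obtain ⟨S, hx, hS⟩ := mem_coreSet_coreNumber G' x
  have hmem : x ∈ coreSet G (coreNumber G' x - 1) := by
    refine ⟨S, hx, fun w hw => ?_⟩
    have hsub : S ∩ G'.neighborSet w ⊆
        insert (if w = u then v else u) (S ∩ G.neighborSet w) := by
      rintro y ⟨hyS, hy⟩
      rw [SimpleGraph.mem_neighborSet] at hy
      rw [hG'] at hy
      simp only [SimpleGraph.sup_adj, SimpleGraph.fromEdgeSet_adj,
        Set.mem_singleton_iff, Sym2.eq_iff] at hy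
      rcases hy with h | ⟨(⟨rfl, rfl⟩ | ⟨rfl, rfl⟩), hne⟩
      · exact Set.mem_insert_of_mem _ ⟨hyS, h⟩
      · simp
      · split <;> simp_all
    have h1 : coreNumber G' x ≤ (S ∩ G'.neighborSet w).ncard := hS w hw
    have h2 : (S ∩ G'.neighborSet w).ncard ≤
        (insert (if w = u then v else u) (S ∩ G.neighborSet w)).ncard :=
      Set.ncard_le_ncard hsub (Set.toFinite _)
    have h3 := Set.ncard_insert_le (if w = u then v else u) (S ∩ G.neighborSet w)
    omega
  have := le_coreNumber G hmem
  omega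

theorem stmt16 (G : SimpleGraph V) (u v : V) (huv : u ≠ v) (hnadj : ¬ G.Adj u v)
    (hle : coreNumber G u ≤ coreNumber G v)
    (G' : SimpleGraph V) (hG' : G' = G ⊔ SimpleGraph.fromEdgeSet {s(u, v)})
    (Vc : Set V)
    (hVc : Vc = {w | Relation.ReflTransGen
      (fun a b => G'.Adj a b ∧ coreNumber G a = coreNumber G u ∧ coreNumber G b = coreNumber G u)
      u w})
    (Vcs : Set V) (hVcs : Vcs = {w ∈ Vc | coreNumber G' w = coreNumber G u + 1}) :
    ∀ w ∈ Vcs,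
      coreNumber G u + 1 ≤ {x ∈ G'.neighborSet w | coreNumber G u ≤ coreNumber G x}.ncard := by
  intro w hw
  rw [hVcs] at hw
  obtain ⟨hwVc, hw'⟩ := hw
  have hwc : w ∈ coreSet G' (coreNumber G u + 1) := by
    rw [← hw']; exact mem_coreSet_coreNumber G' w
  obtain ⟨S, hwS, hS⟩ := hwc
  have key : S ∩ G'.neighborSet w ⊆
      {x ∈ G'.neighborSet w | coreNumber G u ≤ coreNumber G x} := by
    rintro x ⟨hxS, hxN⟩
    refine ⟨hxN, ?_⟩
    have hx' : coreNumber G u + 1 ≤ coreNumber G' x :=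
      le_coreNumber G' ⟨S, hxS, hS⟩
    have h2 := coreNumber_insert_le G u v x
    rw [← hG'] at h2
    omega
  calc coreNumber G u + 1 ≤ (S ∩ G'.neighborSet w).ncard := hS w hwS
    _ ≤ _ := Set.ncard_le_ncard key (Set.toFinite _)
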